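/- For positive reals z, z̄, ȳ, and a > 0, and y > 0, the inequality z·ln(1 + a/y) ≥ 2z̄·ln(1 + a/ȳ) + (z̄·a)/(a + ȳ)·(1 - y/ȳ) - ln(1 + a/ȳ)·z̄²/z holds with equality at (z, y) = (z̄, ȳ). -/

import Mathlib

/-!
Write `L y = log (1 + a / y)`. By AM-GM, `z L y ≥ 2 z̄ √(L y) √(L ȳ) - z̄² L ȳ / z`. The function
`√L` is convex on `(0, ∞)`, so it lies above its tangent line at `ȳ`; multiplying that tangent
bound by `2 z̄ √(L ȳ)` gives exactly the right-hand side, since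
`2 √(L ȳ) (√L)'(ȳ) = L'(ȳ) = -a / (ȳ (ȳ + a))`.

Convexity of `√L` amounts to monotonicity of its derivative `-a / (2 y (y + a) √(L y))`, i.e. of
`(y (y + a))² L y`, whose derivative `y (y + a) (2 (2y + a) L y - a)` is nonnegative because
`L y ≥ a / (y + a)`.
-/

open Real Set

theorem ConvexOn.add_mul_sub_le_of_hasDerivAt {S : Set ℝ} {f : ℝ → ℝ} {x y f' : ℝ}
    (hf : ConvexOn ℝ S f) (hx : x ∈ S) (hy : y ∈ S) (hf' : HasDerivAt f f' x) :
    f x + f' * (y - x) ≤ f y := by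
  rcases lt_trichotomy x y with hxy | rfl | hyx
  · have h := hf.le_slope_of_hasDerivAt hx hy hxy hf'
    rw [slope_def_field, le_div_iff₀ (sub_pos.2 hxy)] at h
    linarith
  · simp
  · have h := hf.slope_le_of_hasDerivAt hy hx hyx hf'
    rw [slope_def_field, div_le_iff₀ (sub_pos.2 hyx)] at h
    linarith

theorem two_mul_mul_add_sub_sq_div_le_mul_sq {z w p q e : ℝ} (hz : 0 < z) (hwq : 0 ≤ w * q)
    (h : q + e ≤ p) :
    2 * (w * q) * (q + e) - (w * q) ^ 2 / z ≤ z * p ^ 2 := by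
  have hamgm : 2 * (w * q) * p - (w * q) ^ 2 / z ≤ z * p ^ 2 := by
    have hsq : 0 ≤ (z * p - w * q) ^ 2 / z := by positivity
    have hexpand : (z * p - w * q) ^ 2 / z = z * p ^ 2 - 2 * (w * q) * p + (w * q) ^ 2 / z := by
      field_simp
      ring
    linarith
  nlinarith [mul_le_mul_of_nonneg_left h hwq]

section

variable {a t : ℝ}

theorem div_add_le_log_one_add_div (ht : 0 < t) (hta : 0 < t + a) :
    a / (t + a) ≤ log (1 + a / t) := by
  have h := one_sub_inv_le_log_of_pos (x := 1 + a / t) (by field_simp; linarith)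
  convert h using 1
  field_simp
  ring

theorem hasDerivAt_log_one_add_div (ht : t ≠ 0) (hta : t + a ≠ 0) :
    HasDerivAt (fun s => log (1 + a / s)) (-a / (t * (t + a))) t := by
  have hsum : 1 + a / t = (t + a) / t := by field_simp
  have hinner : HasDerivAt (fun s => 1 + a / s) (-a / t ^ 2) t := by
    simpa [div_eq_mul_inv] using ((hasDerivAt_inv ht).const_mul a).const_add 1
  convert hinner.log (hsum ▸ div_ne_zero hta ht) using 1
  rw [hsum]
  field_simp

theorem log_one_add_div_pos (ha : 0 < a) (ht : 0 < t) : 0 < log (1 + a / t) :=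
  log_pos (lt_add_of_pos_right 1 (div_pos ha ht))

theorem hasDerivAt_sqrt_log_one_add_div (ha : 0 < a) (ht : 0 < t) :
    HasDerivAt (fun s => √(log (1 + a / s)))
      (-a / (2 * (t * (t + a) * √(log (1 + a / t))))) t := by
  convert (hasDerivAt_log_one_add_div ht.ne' (by positivity)).sqrt
    (log_one_add_div_pos ha ht).ne' using 1
  rw [div_div]
  ring

theorem monotoneOn_sq_mul_log_one_add_div (ha : 0 < a) :
    MonotoneOn (fun t => (t * (t + a)) ^ 2 * log (1 + a / t)) (Ioi 0) := by
  have hderiv : ∀ t ∈ Ioi (0 : ℝ), HasDerivAt (fun t => (t * (t + a)) ^ 2 * log (1 + a / t))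
      (t * (t + a) * (2 * (2 * t + a) * log (1 + a / t) - a)) t := by
    intro t ht
    have ht : 0 < t := ht
    refine ((((hasDerivAt_id' t).fun_mul ((hasDerivAt_id' t).add_const a)).fun_pow 2).fun_mul
      (hasDerivAt_log_one_add_div ht.ne' (by positivity))).congr_deriv ?_
    field_simp
    ring
  refine monotoneOn_of_hasDerivWithinAt_nonneg (convex_Ioi 0)
    (fun t ht => (hderiv t ht).continuousAt.continuousWithinAt)
    (fun t ht => (hderiv t (interior_subset ht)).hasDerivWithinAt) fun t ht => ?_
  rw [interior_Ioi] at ht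
  have ht : 0 < t := ht
  have hlog := div_add_le_log_one_add_div ht (by positivity : 0 < t + a)
  have hbound : a ≤ 2 * (2 * t + a) * (a / (t + a)) := by
    rw [mul_div_assoc', le_div_iff₀ (by positivity)]
    nlinarith
  have := mul_le_mul_of_nonneg_left hlog (by positivity : (0 : ℝ) ≤ 2 * (2 * t + a))
  exact mul_nonneg (by positivity) (by linarith)

theorem monotoneOn_mul_sqrt_log_one_add_div (ha : 0 < a) :
    MonotoneOn (fun t => t * (t + a) * √(log (1 + a / t))) (Ioi 0) := by
  intro s hs t ht hst
  have hs : 0 < s := hs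
  have ht : 0 < t := ht
  have hsq : ∀ u : ℝ, 0 < u → (u * (u + a) * √(log (1 + a / u))) ^ 2 =
      (u * (u + a)) ^ 2 * log (1 + a / u) := fun u hu => by
    rw [mul_pow, sq_sqrt (log_one_add_div_pos ha hu).le]
  rw [← pow_le_pow_iff_left₀ (by positivity) (by positivity) two_ne_zero, hsq s hs, hsq t ht]
  exact monotoneOn_sq_mul_log_one_add_div ha hs ht hst

theorem convexOn_sqrt_log_one_add_div (ha : 0 < a) :
    ConvexOn ℝ (Ioi 0) (fun t => √(log (1 + a / t))) := by
  have hderiv : ∀ t ∈ Ioi (0 : ℝ), HasDerivAt (fun s => √(log (1 + a / s)))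
      (-a / (2 * (t * (t + a) * √(log (1 + a / t))))) t :=
    fun t ht => hasDerivAt_sqrt_log_one_add_div ha ht
  refine MonotoneOn.convexOn_of_deriv (convex_Ioi 0)
    (fun t ht => (hderiv t ht).continuousAt.continuousWithinAt)
    (fun t ht => (hderiv t (interior_subset ht)).differentiableAt.differentiableWithinAt) ?_
  rw [interior_Ioi]
  intro s hs t ht hst
  rw [(hderiv s hs).deriv, (hderiv t ht).deriv, neg_div, neg_div, neg_le_neg_iff]
  have hs : 0 < s := hs
  have hpos : 0 < s * (s + a) * √(log (1 + a / s)) :=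
    mul_pos (by positivity) (sqrt_pos.2 (log_one_add_div_pos ha hs))
  exact div_le_div_of_nonneg_left ha.le (mul_pos two_pos hpos)
    (mul_le_mul_of_nonneg_left (monotoneOn_mul_sqrt_log_one_add_div ha hs ht hst) two_pos.le)

end

theorem rate_sca_lower_bound (z zbar ybar a y : ℝ)
    (hz : 0 < z) (hzb : 0 < zbar) (hyb : 0 < ybar) (ha : 0 < a) (hy : 0 < y) :
    (z * Real.log (1 + a / y) ≥
      2 * zbar * Real.log (1 + a / ybar)
      + (zbar * a) / (a + ybar) * (1 - y / ybar)
      - Real.log (1 + a / ybar) * zbar^2 / z) ∧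
    (z = zbar → y = ybar →
      z * Real.log (1 + a / y) =
        2 * zbar * Real.log (1 + a / ybar)
        + (zbar * a) / (a + ybar) * (1 - y / ybar)
        - Real.log (1 + a / ybar) * zbar^2 / z) := by
  refine ⟨?_, fun hzz hyy => ?_⟩
  · have htan := (convexOn_sqrt_log_one_add_div ha).add_mul_sub_le_of_hasDerivAt hyb hy
      (hasDerivAt_sqrt_log_one_add_div ha hyb)
    have hbound := two_mul_mul_add_sub_sq_div_le_mul_sq hz (mul_nonneg hzb.le (sqrt_nonneg _)) htan
    rw [sq_sqrt (log_one_add_div_pos ha hy).le] at hbound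
    have hLbar := log_one_add_div_pos ha hyb
    have hsq := sq_sqrt hLbar.le
    have hne : √(log (1 + a / ybar)) ≠ 0 := (sqrt_pos.2 hLbar).ne'
    generalize √(log (1 + a / ybar)) = S at hbound hsq hne
    rw [ge_iff_le, ← hsq]
    refine Eq.trans_le ?_ hbound
    field_simp
    ring
  · subst hzz hyy
    field_simp
    ring
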